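/- Let p₁ = [0:1], p₂ = [1:1], p₃ = [2:1], p₄ = [3:1], p₅ = [6:1] in ℙ¹(ℚ), and let Γ_P be the subgroup of PGL₂(ℚ) generated by all elements g such that for some pairwise distinct indices i, j, k, l ∈ {1,…,5} one has g(p_i) = p_j, g(p_j) = p_i, g(p_k) = p_l, and g(p_l) = p_k. Then for every natural number n, the class in PGL₂(ℚ) of the matrix with rows (1, 3⁻ⁿ),(0,1) — i.e., the Möbius transformation z ↦ z + 3⁻ⁿ — belongs to Γ_P. -/

import Mathlib

open Matrix

noncomputable section

/-- The projective line `ℙ¹(K)` over a field `K`, as the projectivization of `K²`. -/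
abbrev P1 (K : Type*) [Field K] : Type _ := Projectivization K (Fin 2 → K)

/-- `PGL₂(K)`: the quotient of `GL₂(K)` by its center. -/
abbrev PGL2 (K : Type*) [Field K] : Type _ :=
  GL (Fin 2) K ⧸ Subgroup.center (GL (Fin 2) K)

namespace PGL2

variable {K : Type*} [Field K]

/-- The linear automorphism of `K²` attached to an element of `GL₂(K)`. -/
def glEquiv (g : GL (Fin 2) K) : (Fin 2 → K) ≃ₗ[K] (Fin 2 → K) :=
  (Matrix.GeneralLinearGroup.toLin g).toLinearEquiv

lemma glEquiv_apply (g : GL (Fin 2) K) (v : Fin 2 → K) :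
    glEquiv g v = (g : Matrix (Fin 2) (Fin 2) K).mulVec v := rfl

/-- `GL₂(K)` acts on `ℙ¹(K)` by Möbius transformations. -/
instance : SMul (GL (Fin 2) K) (P1 K) :=
  ⟨fun g => Projectivization.map (glEquiv g).toLinearMap (glEquiv g).injective⟩

lemma gl_smul_mk (g : GL (Fin 2) K) (v : Fin 2 → K) (hv : v ≠ 0) :
    g • Projectivization.mk K v hv
      = Projectivization.mk K ((g : Matrix (Fin 2) (Fin 2) K).mulVec v)
          (fun h => hv ((glEquiv g).injective (by rw [map_zero]; exact h))) :=
  Projectivization.map_mk (glEquiv g).toLinearMap (glEquiv g).injective v hv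

instance : MulAction (GL (Fin 2) K) (P1 K) where
  one_smul x := by
    induction x using Projectivization.ind with
    | h v hv => rw [gl_smul_mk]; simp
  mul_smul g h x := by
    induction x using Projectivization.ind with
    | h v hv => rw [gl_smul_mk, gl_smul_mk, gl_smul_mk]; congr 1; simp only [Units.val_mul, Matrix.mulVec_mulVec]

lemma exists_scalar_of_mem_center (g : GL (Fin 2) K)
    (hg : g ∈ Subgroup.center (GL (Fin 2) K)) :
    ∃ a : K, (g : Matrix (Fin 2) (Fin 2) K) = a • (1 : Matrix (Fin 2) (Fin 2) K) := by
  have hmem := Subgroup.mem_center_iff.mp hg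
  set A : Matrix (Fin 2) (Fin 2) K := (g : Matrix (Fin 2) (Fin 2) K) with hA
  have hUdet : ((!![1, 1; 0, 1] : Matrix (Fin 2) (Fin 2) K)).det ≠ 0 := by
    norm_num [Matrix.det_fin_two_of]
  have hLdet : ((!![1, 0; 1, 1] : Matrix (Fin 2) (Fin 2) K)).det ≠ 0 := by
    norm_num [Matrix.det_fin_two_of]
  have hU := congrArg Units.val (hmem (Matrix.GeneralLinearGroup.mkOfDetNeZero _ hUdet))
  have hL := congrArg Units.val (hmem (Matrix.GeneralLinearGroup.mkOfDetNeZero _ hLdet))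
  have hU' : (!![1, 1; 0, 1] : Matrix (Fin 2) (Fin 2) K) * A = A * !![1, 1; 0, 1] := hU
  have hL' : (!![1, 0; 1, 1] : Matrix (Fin 2) (Fin 2) K) * A = A * !![1, 0; 1, 1] := hL
  have e1 := congrFun (congrFun hU' 0) 0
  have e2 := congrFun (congrFun hU' 0) 1
  have e3 := congrFun (congrFun hL' 0) 0
  simp [Matrix.mul_apply, Fin.sum_univ_two] at e1 e2 e3
  refine ⟨A 0 0, ?_⟩
  ext i j
  fin_cases i <;> fin_cases j <;>
    simp [Matrix.one_apply] <;> first | exact e3 | exact e1 | linear_combination e2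



lemma center_smul_eq (g : GL (Fin 2) K) (hg : g ∈ Subgroup.center (GL (Fin 2) K))
    (x : P1 K) : g • x = x := by
  obtain ⟨a, hA⟩ := exists_scalar_of_mem_center g hg
  have ha : a ≠ 0 := by
    intro h
    subst h
    have : IsUnit (g : Matrix (Fin 2) (Fin 2) K).det := ⟨Matrix.GeneralLinearGroup.det g, rfl⟩
    rw [hA] at this
    simp at this
  induction x using Projectivization.ind with
  | h v hv =>
    rw [gl_smul_mk]
    rw [Projectivization.mk_eq_mk_iff]
    exact ⟨Units.mk0 a ha, by ext i; fin_cases i <;> simp [hA, Matrix.mulVec, dotProduct, Fin.sum_univ_two, Matrix.one_apply]⟩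

/-- `PGL₂(K)` acts on `ℙ¹(K)` by Möbius transformations. -/
def toPerm : PGL2 K →* Equiv.Perm (P1 K) :=
  QuotientGroup.lift _ (MulAction.toPermHom (GL (Fin 2) K) (P1 K))
    (fun g hg => Equiv.ext fun x => center_smul_eq g hg x)

instance : SMul (PGL2 K) (P1 K) := ⟨fun g x => toPerm g x⟩

lemma smul_def (g : PGL2 K) (x : P1 K) : g • x = toPerm g x := rfl

instance : MulAction (PGL2 K) (P1 K) where
  one_smul x := by simp [smul_def]
  mul_smul g h x := by simp [smul_def]

/-- The class in `PGL₂(K)` of a matrix with nonzero determinant. -/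
def cls (M : Matrix (Fin 2) (Fin 2) K) (h : M.det ≠ 0) : PGL2 K :=
  QuotientGroup.mk (Matrix.GeneralLinearGroup.mkOfDetNeZero M h)

lemma cls_smul_mk (M : Matrix (Fin 2) (Fin 2) K) (h : M.det ≠ 0) (v : Fin 2 → K)
    (hv : v ≠ 0) (hMv : M.mulVec v ≠ 0) :
    cls M h • Projectivization.mk K v hv = Projectivization.mk K (M.mulVec v) hMv := by
  rw [smul_def, cls]
  show (Matrix.GeneralLinearGroup.mkOfDetNeZero M h) • Projectivization.mk K v hv = _
  rw [gl_smul_mk]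
  rfl

lemma vec_ne_zero (a : K) : ![a, (1 : K)] ≠ 0 := fun h => by simpa using congrFun h 1

/-- The affine point `[z : 1]` of `ℙ¹(K)`. -/
def affPt (z : K) : P1 K := Projectivization.mk K ![z, 1] (vec_ne_zero z)

/-- The point `[a : b]` of `ℙ¹(K)`. -/
def pt (a b : K) (h : ![a, b] ≠ 0) : P1 K := Projectivization.mk K ![a, b] h

end PGL2


open PGL2

/-- The configuration `P = (0, 1, 2, 3, 6)` in `ℙ¹(ℚ)`. -/
noncomputable def pconf : Fin 5 → P1 ℚ :=
  ![affPt 0, affPt 1, affPt 2, affPt 3, affPt 6]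

/-- `Γ_P`: the subgroup of `PGL₂(ℚ)` generated by the involutions exchanging two
disjoint pairs of points of the configuration `P`. -/
noncomputable def GammaP : Subgroup (PGL2 ℚ) :=
  Subgroup.closure {g : PGL2 ℚ | ∃ i j k l : Fin 5,
    i ≠ j ∧ i ≠ k ∧ i ≠ l ∧ j ≠ k ∧ j ≠ l ∧ k ≠ l ∧
    g • pconf i = pconf j ∧ g • pconf j = pconf i ∧
    g • pconf k = pconf l ∧ g • pconf l = pconf k}

/-! The translation `z ↦ z + 1` and the dilation `z ↦ 3z` are each a product of three double
transpositions of `P` (the product matrices are scalar multiples of theirs). Conjugating the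
translation by `b` with the dilation by `3` gives the translation by `b / 3`, so induction on `n`
reaches `z ↦ z + 3⁻ⁿ`. -/

lemma zpow_neg_natCast_succ {G : Type*} [DivisionCommMonoid G] (a : G) (n : ℕ) :
    a ^ (-((n + 1 : ℕ) : ℤ)) = a ^ (-(n : ℤ)) / a := by
  rw [_root_.zpow_neg, _root_.zpow_neg, zpow_natCast, zpow_natCast, pow_succ, mul_inv,
    div_eq_mul_inv]

namespace PGL2

variable {K : Type*} [Field K]

lemma cls_mul {M N : Matrix (Fin 2) (Fin 2) K} (hM : M.det ≠ 0) (hN : N.det ≠ 0) :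
    cls M hM * cls N hN = cls (M * N) (by rw [det_mul]; exact mul_ne_zero hM hN) := by
  rw [cls, cls, ← QuotientGroup.mk_mul]
  congr 1
  exact Units.ext rfl

lemma cls_eq_of_eq_smul {M N : Matrix (Fin 2) (Fin 2) K} (hM : M.det ≠ 0) (hN : N.det ≠ 0)
    {a : K} (ha : a ≠ 0) (hMN : M = a • N) : cls M hM = cls N hN := by
  have hscalar : GeneralLinearGroup.mkOfDetNeZero M hM = GeneralLinearGroup.mkOfDetNeZero N hN *
      GeneralLinearGroup.scalar (Fin 2) (Units.mk0 a ha) :=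
    Units.ext (by simp [hMN, GeneralLinearGroup.coe_scalar, smul_eq_mul_diagonal])
  have hcenter :
      GeneralLinearGroup.scalar (Fin 2) (Units.mk0 a ha) ∈ Subgroup.center (GL (Fin 2) K) := by
    rw [GeneralLinearGroup.center_eq_range_scalar]
    exact ⟨_, rfl⟩
  rw [cls, cls, hscalar, QuotientGroup.mk_mul, (QuotientGroup.eq_one_iff _).mpr hcenter, mul_one]

lemma cls_smul_affPt {a b c d : K} (h : (!![a, b; c, d]).det ≠ 0) {z w : K}
    (hz : c * z + d ≠ 0) (hw : a * z + b = (c * z + d) * w) :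
    cls !![a, b; c, d] h • affPt z = affPt w := by
  have hv : (!![a, b; c, d]).mulVec ![z, 1] = (c * z + d) • ![w, 1] := by
    ext i; fin_cases i <;> simp [← hw, mul_comm]
  rw [affPt, cls_smul_mk _ h _ _ (hv ▸ smul_ne_zero hz (vec_ne_zero w)), affPt,
    Projectivization.mk_eq_mk_iff]
  exact ⟨Units.mk0 _ hz, hv.symm⟩

def translation (b : K) : PGL2 K :=
  cls !![1, b; 0, 1] (by simp [det_fin_two_of])

def dilation (a : K) (ha : a ≠ 0) : PGL2 K :=
  cls !![a, 0; 0, 1] (by simpa [det_fin_two_of])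

lemma dilation_mul_translation {a : K} (ha : a ≠ 0) (b : K) :
    dilation a ha * translation b = translation (a * b) * dilation a ha := by
  simp only [dilation, translation, cls_mul]
  congr 1
  ext i j; fin_cases i <;> fin_cases j <;> simp

lemma translation_div_mem {H : Subgroup (PGL2 K)} {a b : K} (ha : a ≠ 0)
    (hdil : dilation a ha ∈ H) (htr : translation b ∈ H) : translation (b / a) ∈ H := by
  have hconj := dilation_mul_translation ha (b / a)
  rw [mul_div_cancel₀ b ha] at hconj
  rw [eq_inv_mul_of_mul_eq hconj]
  exact H.mul_mem (H.inv_mem hdil) (H.mul_mem htr hdil)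

end PGL2

lemma translation_one_mem_GammaP : translation (1 : ℚ) ∈ GammaP := by
  have h₁ : cls !![(3 : ℚ), -3; 2, -3] (by norm_num [det_fin_two_of]) ∈ GammaP := by
    refine Subgroup.subset_closure ⟨0, 1, 2, 3, ?_⟩
    and_intros <;> first | decide | (apply cls_smul_affPt <;> norm_num)
  have h₂ : cls !![(18 : ℚ), -36; 7, -18] (by norm_num [det_fin_two_of]) ∈ GammaP := by
    refine Subgroup.subset_closure ⟨0, 2, 3, 4, ?_⟩
    and_intros <;> first | decide | (apply cls_smul_affPt <;> norm_num)
  have h₃ : cls !![(6 : ℚ), -12; 5, -6] (by norm_num [det_fin_two_of]) ∈ GammaP := by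
    refine Subgroup.subset_closure ⟨0, 2, 1, 4, ?_⟩
    and_intros <;> first | decide | (apply cls_smul_affPt <;> norm_num)
  convert GammaP.mul_mem (GammaP.mul_mem h₁ h₂) h₃ using 1
  rw [cls_mul, cls_mul, translation]
  symm
  apply cls_eq_of_eq_smul (a := -72) (ha := by norm_num)
  ext i j; fin_cases i <;> fin_cases j <;> norm_num [mul_apply]

lemma dilation_three_mem_GammaP : dilation (3 : ℚ) three_ne_zero ∈ GammaP := by
  have h₁ : cls !![(9 : ℚ), -9; 4, -9] (by norm_num [det_fin_two_of]) ∈ GammaP := by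
    refine Subgroup.subset_closure ⟨0, 1, 3, 4, ?_⟩
    and_intros <;> first | decide | (apply cls_smul_affPt <;> norm_num)
  have h₂ : cls !![(9 : ℚ), -24; 4, -9] (by norm_num [det_fin_two_of]) ∈ GammaP := by
    refine Subgroup.subset_closure ⟨1, 3, 2, 4, ?_⟩
    and_intros <;> first | decide | (apply cls_smul_affPt <;> norm_num)
  have h₃ : cls !![(1 : ℚ), -3; 0, -1] (by norm_num [det_fin_two_of]) ∈ GammaP := by
    refine Subgroup.subset_closure ⟨0, 3, 1, 2, ?_⟩
    and_intros <;> first | decide | (apply cls_smul_affPt <;> norm_num)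
  convert GammaP.mul_mem (GammaP.mul_mem h₁ h₂) h₃ using 1
  rw [cls_mul, cls_mul, dilation]
  symm
  apply cls_eq_of_eq_smul (a := 15) (ha := by norm_num)
  ext i j; fin_cases i <;> fin_cases j <;> norm_num [mul_apply]

/-- For every natural number `n`, the Möbius transformation `z ↦ z + 3⁻ⁿ`
belongs to `Γ_P`. -/
theorem translation_by_three_pow_neg_mem_GammaP (n : ℕ) :
    cls !![(1 : ℚ), (3 : ℚ) ^ (-(n : ℤ)); 0, 1] (by norm_num [Matrix.det_fin_two_of])
      ∈ GammaP := by
  show translation _ ∈ GammaP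
  induction n with
  | zero => simpa using translation_one_mem_GammaP
  | succ n ih =>
    rw [zpow_neg_natCast_succ]
    exact translation_div_mem three_ne_zero dilation_three_mem_GammaP ih
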